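/- arXiv:1212.4574 — 3 statements merged into one kernel-verified Lean document; each statement's English description precedes it below -/
import Mathlib

section
/- Let c be the Cantor–Lebesgue function and f(x) = c(|x|) on [−1,1], with D = C ∪ (−C) for C the Cantor set. Then f does not have negligible conditional variation on D ∩ [0,1] (as a subset of [0,1]), even though it has negligible conditional variation on D as a subset of [−1,1]. In particular, negligible conditional variation on a set does not pass to subsets. -/
open Set MeasureTheory Filter
open scoped Classical

/-- A tagged partition of `[a, b]`: division points `t 0 = a ≤ t 1 ≤ ⋯ ≤ t n = b`
together with tags `tag i ∈ [t i, t (i+1)]`. -/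
structure TaggedPartition (a b : ℝ) where
  n : ℕ
  t : ℕ → ℝ
  tag : ℕ → ℝ
  t_first : t 0 = a
  t_last : t n = b
  t_mono : ∀ i < n, t i ≤ t (i + 1)
  tag_mem : ∀ i < n, tag i ∈ Set.Icc (t i) (t (i + 1))

/-- A tagged partition is subordinate to a gauge `δ` if each interval is contained in the
open ball of radius `δ` around its tag. -/
def TaggedPartition.Subordinate {a b : ℝ} (P : TaggedPartition a b) (δ : ℝ → ℝ) : Prop :=
  ∀ i < P.n,
    Set.Icc (P.t i) (P.t (i + 1)) ⊆ Set.Ioo (P.tag i - δ (P.tag i)) (P.tag i + δ (P.tag i))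

/-- A gauge on `[a, b]` is positive on `[a, b]`. -/
def IsGauge (a b : ℝ) (δ : ℝ → ℝ) : Prop := ∀ x ∈ Set.Icc a b, 0 < δ x

/-- `f` has negligible variation on `E ⊆ [a, b]`. -/

def NegVar (a b : ℝ) (f : ℝ → ℝ) (E : Set ℝ) : Prop :=
  ∀ ε > 0, ∃ δ : ℝ → ℝ, IsGauge a b δ ∧ ∀ P : TaggedPartition a b, P.Subordinate δ →
    (∑ i ∈ Finset.range P.n,
      if P.tag i ∈ E then |f (P.t (i + 1)) - f (P.t i)| else 0) < ε

/-- `f` has negligible conditional variation on `E ⊆ [a, b]`. -/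

def NegCondVar (a b : ℝ) (f : ℝ → ℝ) (E : Set ℝ) : Prop :=
  ∀ ε > 0, ∃ δ : ℝ → ℝ, IsGauge a b δ ∧ ∀ P : TaggedPartition a b, P.Subordinate δ →
    |∑ i ∈ Finset.range P.n,
      if P.tag i ∈ E then f (P.t (i + 1)) - f (P.t i) else 0| < ε

/-- `I` is the Henstock–Kurzweil integral of `h` on `[a, b]` (with `a ≤ b`). -/
def HKIntegralTo (a b : ℝ) (h : ℝ → ℝ) (I : ℝ) : Prop :=
  ∀ ε > 0, ∃ δ : ℝ → ℝ, IsGauge a b δ ∧ ∀ P : TaggedPartition a b, P.Subordinate δ →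
    |(∑ i ∈ Finset.range P.n, h (P.tag i) * (P.t (i + 1) - P.t i)) - I| < ε

/-- Oriented HK integral: `(HK)∫_a^b h = I`, with the convention
`(HK)∫_b^a h = -(HK)∫_a^b h`. -/
def HKIntegral (a b : ℝ) (h : ℝ → ℝ) (I : ℝ) : Prop :=
  if a ≤ b then HKIntegralTo a b h I else HKIntegralTo b a h (-I)

lemma TaggedPartition.t_mono' {a b : ℝ} (P : TaggedPartition a b) {i j : ℕ}
    (hij : i ≤ j) (hj : j ≤ P.n) : P.t i ≤ P.t j := by
  induction j with
  | zero =>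
      have : i = 0 := by omega
      subst this; exact le_refl _
  | succ j ih =>
      rcases Nat.eq_or_lt_of_le hij with h | h
      · subst h; exact le_refl _
      · exact le_trans (ih (by omega) (by omega)) (P.t_mono j (by omega))

lemma TaggedPartition.t_mem {a b : ℝ} (P : TaggedPartition a b) {i : ℕ}
    (hi : i ≤ P.n) : P.t i ∈ Set.Icc a b := by
  constructor
  · have h := P.t_mono' (Nat.zero_le i) hi; rwa [P.t_first] at h
  · have h := P.t_mono' hi (le_refl P.n); rwa [P.t_last] at h

/-- Cousin's lemma for this structure. -/
lemma cousin {a b : ℝ} (hab : a ≤ b) (δ : ℝ → ℝ) (hδ : IsGauge a b δ) :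
    ∃ P : TaggedPartition a b, P.Subordinate δ := by
  set S : Set ℝ := {x | x ∈ Set.Icc a b ∧ ∃ P : TaggedPartition a x, P.Subordinate δ} with hS
  have haS : a ∈ S := by
    refine ⟨⟨le_rfl, hab⟩, ⟨0, fun _ => a, fun _ => a, rfl, rfl, fun i hi => absurd hi (by omega), fun i hi => absurd hi (by omega)⟩, ?_⟩
    intro i hi; exact absurd hi (by dsimp only; omega)
  have hbdd : BddAbove S := ⟨b, fun x hx => hx.1.2⟩
  have hne : S.Nonempty := ⟨a, haS⟩
  set s := sSup S with hs
  have has : a ≤ s := le_csSup hbdd haS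
  have hsb : s ≤ b := csSup_le hne fun x hx => hx.1.2
  have hδs : 0 < δ s := hδ s ⟨has, hsb⟩
  obtain ⟨x, hxS, hxgt⟩ : ∃ x ∈ S, s - δ s < x :=
    exists_lt_of_lt_csSup hne (by linarith)
  have hxs : x ≤ s := le_csSup hbdd hxS
  obtain ⟨⟨hax, hxb⟩, P, hPsub⟩ := hxS
  set b' := min (s + δ s / 2) b with hb'
  have hsb' : s ≤ b' := le_min (by linarith) hsb
  have hb'lt : b' < s + δ s := lt_of_le_of_lt (min_le_left _ _) (by linarith)
  have hxb' : x ≤ b' := le_trans hxs hsb'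
  have hb'S : b' ∈ S := by
    refine ⟨⟨le_trans hax hxb', min_le_right _ _⟩,
      ⟨P.n + 1, fun i => if i ≤ P.n then P.t i else b',
        fun i => if i < P.n then P.tag i else s, ?_, ?_, ?_, ?_⟩, ?_⟩
    · simp [P.t_first]
    · simp
    · intro i hi
      rcases lt_or_ge i P.n with h | h
      · simp only [if_pos (le_of_lt h), if_pos (by omega : i + 1 ≤ P.n)]
        exact P.t_mono i h
      · have hi' : i = P.n := by omega
        subst hi'
        simp only [if_pos le_rfl, if_neg (by omega : ¬ P.n + 1 ≤ P.n)]
        rw [P.t_last]; exact hxb'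
    · intro i hi
      rcases lt_or_ge i P.n with h | h
      · simp only [if_pos h, if_pos (le_of_lt h), if_pos (by omega : i + 1 ≤ P.n)]
        exact P.tag_mem i h
      · have hi' : i = P.n := by omega
        subst hi'
        simp only [if_neg (lt_irrefl _), if_pos le_rfl, if_neg (by omega : ¬ P.n + 1 ≤ P.n)]
        rw [P.t_last]; exact ⟨hxs, hsb'⟩
    · intro i hi
      dsimp only at hi ⊢
      rcases lt_or_ge i P.n with h | h
      · simp only [if_pos h, if_pos (le_of_lt h), if_pos (by omega : i + 1 ≤ P.n)]
        exact hPsub i h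
      · have hi' : i = P.n := by omega
        subst hi'
        simp only [if_neg (lt_irrefl _), if_pos le_rfl, if_neg (by omega : ¬ P.n + 1 ≤ P.n)]
        rw [P.t_last]
        intro y hy
        exact ⟨lt_of_lt_of_le hxgt hy.1, lt_of_le_of_lt hy.2 hb'lt⟩
  have hb's : b' ≤ s := le_csSup hbdd hb'S
  have hsb2 : s = b := by
    by_contra h
    have h1 : s < b := lt_of_le_of_ne hsb h
    have h2 : s < b' := lt_min (by linarith) h1
    linarith
  have hb'b : b' = b := le_antisymm (min_le_right _ _) (by rw [← hsb2]; exact hsb')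
  rw [hb'b] at hb'S
  exact hb'S.2

lemma const_on_gap (c : ℝ → ℝ) (hc_cont : ContinuousOn c (Set.Icc 0 1))
    (hc_const : ∀ x ∈ Set.Icc (0:ℝ) 1, x ∉ cantorSet → ∀ᶠ y in nhds x, c y = c x)
    {u v : ℝ} (huv : u ≤ v) (h01 : Set.Icc u v ⊆ Set.Icc 0 1)
    (hC : ∀ y ∈ Set.Icc u v, y ∉ cantorSet) : c v = c u := by
  set S : Set ℝ := Set.Icc u v ∩ c ⁻¹' {c u} with hSdef
  have hclosed : IsClosed S :=
    (hc_cont.mono h01).preimage_isClosed_of_isClosed isClosed_Icc isClosed_singleton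
  have huS : u ∈ S := ⟨⟨le_rfl, huv⟩, rfl⟩
  have hbdd : BddAbove S := ⟨v, fun x hx => hx.1.2⟩
  have hmem : sSup S ∈ S := hclosed.csSup_mem ⟨u, huS⟩ hbdd
  set s₀ := sSup S with hs₀
  have hcs₀ : c s₀ = c u := hmem.2
  have hev := hc_const s₀ (h01 hmem.1) (hC s₀ hmem.1)
  rw [Metric.eventually_nhds_iff] at hev
  obtain ⟨r, hr, hball⟩ := hev
  have hs₀v : s₀ = v := by
    by_contra hne
    have hlt : s₀ < v := lt_of_le_of_ne hmem.1.2 hne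
    set z := min (s₀ + r / 2) v with hz
    have hzgt : s₀ < z := lt_min (by linarith) hlt
    have hzS : z ∈ S := by
      refine ⟨⟨le_trans hmem.1.1 (le_of_lt hzgt), min_le_right _ _⟩, ?_⟩
      have hdz : dist z s₀ < r := by
        rw [Real.dist_eq, abs_lt]
        constructor
        · linarith
        · have : z ≤ s₀ + r / 2 := min_le_left _ _
          linarith
      simp only [Set.mem_preimage, Set.mem_singleton_iff]
      rw [hball hdz, hcs₀]
    have : z ≤ s₀ := le_csSup hbdd hzS
    linarith
  rw [← hs₀v, hcs₀]

/-- `x ↦ c(|x|)` has negligible conditional variation on `D = C ∪ (−C)` as a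
subset of `[-1,1]`, but not on `D ∩ [0,1]` as a subset of `[0,1]`: negligible conditional
variation does not pass to subsets. -/
theorem stmt13 (c : ℝ → ℝ)
    (hc_mono : MonotoneOn c (Set.Icc 0 1)) (hc_cont : ContinuousOn c (Set.Icc 0 1))
    (hc0 : c 0 = 0) (hc1 : c 1 = 1)
    (hc_const : ∀ x ∈ Set.Icc (0:ℝ) 1, x ∉ cantorSet → ∀ᶠ y in nhds x, c y = c x) :
    ¬ NegCondVar 0 1 (fun x => c |x|)
        ((cantorSet ∪ (fun x : ℝ => -x) '' cantorSet) ∩ Set.Icc 0 1) ∧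
    NegCondVar (-1) 1 (fun x => c |x|) (cantorSet ∪ (fun x : ℝ => -x) '' cantorSet) := by
  constructor
  · -- Part A: not NegCondVar on D ∩ [0,1] over [0,1]
    intro h
    obtain ⟨E, hE⟩ : ∃ E : Set ℝ,
        E = (cantorSet ∪ (fun x : ℝ => -x) '' cantorSet) ∩ Set.Icc 0 1 := ⟨_, rfl⟩
    rw [← hE] at h
    obtain ⟨δ, hδ, hP⟩ := h (1/2) (by norm_num)
    set δ' : ℝ → ℝ :=
      fun x => if x ∈ cantorSet then δ x else min (δ x) (Metric.infDist x cantorSet) with hδ'def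
    have hCne : cantorSet.Nonempty := ⟨0, zero_mem_cantorSet⟩
    have hδ'gauge : IsGauge 0 1 δ' := by
      intro x hx
      by_cases hxC : x ∈ cantorSet
      · simpa [hδ'def, hxC] using hδ x hx
      · have h1 : 0 < δ x := hδ x hx
        have h2 : 0 < Metric.infDist x cantorSet :=
          (isClosed_cantorSet.notMem_iff_infDist_pos hCne).1 hxC
        simp only [hδ'def, if_neg hxC]
        exact lt_min h1 h2
    obtain ⟨P, hPsub⟩ := cousin (by norm_num : (0:ℝ) ≤ 1) δ' hδ'gauge
    have hle : ∀ x, δ' x ≤ δ x := by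
      intro x
      by_cases hxC : x ∈ cantorSet <;> simp [hδ'def, hxC, min_le_left]
    have hsubδ : P.Subordinate δ := by
      intro i hi y hy
      obtain ⟨h1, h2⟩ := hPsub i hi hy
      have := hle (P.tag i)
      exact ⟨by linarith, by linarith⟩
    have hspec := hP P hsubδ
    have key : (∑ i ∈ Finset.range P.n,
        if P.tag i ∈ E then
          (fun x => c |x|) (P.t (i + 1)) - (fun x => c |x|) (P.t i) else 0) = 1 := by
      have hcongr : ∀ i ∈ Finset.range P.n,
          (if P.tag i ∈ E then
            (fun x => c |x|) (P.t (i + 1)) - (fun x => c |x|) (P.t i) else 0)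
          = c (P.t (i + 1)) - c (P.t i) := by
        intro i hi
        rw [Finset.mem_range] at hi
        have hti : P.t i ∈ Set.Icc (0:ℝ) 1 := P.t_mem (le_of_lt hi)
        have hti1 : P.t (i + 1) ∈ Set.Icc (0:ℝ) 1 := P.t_mem hi
        have habs1 : |P.t i| = P.t i := abs_of_nonneg hti.1
        have habs2 : |P.t (i + 1)| = P.t (i + 1) := abs_of_nonneg hti1.1
        by_cases htag : P.tag i ∈ E
        · simp only [if_pos htag, habs1, habs2]
        · rw [if_neg htag]
          have htagIcc : P.tag i ∈ Set.Icc (0:ℝ) 1 := by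
            have := P.tag_mem i hi
            exact ⟨le_trans hti.1 this.1, le_trans this.2 hti1.2⟩
          have htagC : P.tag i ∉ cantorSet := by
            intro hc
            rw [hE] at htag
            exact htag ⟨Or.inl hc, htagIcc⟩
          have hIccC : ∀ y ∈ Set.Icc (P.t i) (P.t (i + 1)), y ∉ cantorSet := by
            intro y hy hyC
            have hyIoo := hPsub i hi hy
            have hδ'eq : δ' (P.tag i) = min (δ (P.tag i)) (Metric.infDist (P.tag i) cantorSet) := by
              simp [hδ'def, htagC]
            have hdist : |y - P.tag i| < Metric.infDist (P.tag i) cantorSet := by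
              rw [abs_lt]
              have h2 : δ' (P.tag i) ≤ Metric.infDist (P.tag i) cantorSet := by
                rw [hδ'eq]; exact min_le_right _ _
              exact ⟨by linarith [hyIoo.1], by linarith [hyIoo.2]⟩
            have : Metric.infDist (P.tag i) cantorSet ≤ dist (P.tag i) y :=
              Metric.infDist_le_dist_of_mem hyC
            rw [Real.dist_eq, abs_sub_comm] at this
            linarith
          have hcc : c (P.t (i + 1)) = c (P.t i) :=
            const_on_gap c hc_cont hc_const (P.t_mono i hi)
              (Set.Icc_subset_Icc hti.1 hti1.2) hIccC
          simp only [hcc, sub_self]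
      rw [Finset.sum_congr rfl hcongr, Finset.sum_range_sub (fun k => c (P.t k)) P.n,
        P.t_first, P.t_last, hc0, hc1]
      norm_num
    beta_reduce at hspec
    beta_reduce at key
    rw [key] at hspec
    norm_num at hspec
  · -- Part B: NegCondVar on D over [-1,1]
    obtain ⟨D, hD⟩ : ∃ D : Set ℝ,
        D = cantorSet ∪ (fun x : ℝ => -x) '' cantorSet := ⟨_, rfl⟩
    rw [← hD]
    intro ε hε
    have key : ∀ x, x ∈ Set.Icc (-1:ℝ) 1 → x ∉ D →
        ∃ r > 0, ∀ y : ℝ, dist y x < r → c |y| = c |x| := by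
      intro x hx hxD
      rw [hD] at hxD
      have hxabs : |x| ∈ Set.Icc (0:ℝ) 1 := by
        constructor
        · exact abs_nonneg x
        · rw [abs_le]; exact ⟨hx.1, hx.2⟩
      have hxabsC : |x| ∉ cantorSet := by
        intro hc
        rcases abs_cases x with ⟨h1, _⟩ | ⟨h1, _⟩
        · rw [h1] at hc; exact hxD (Or.inl hc)
        · rw [h1] at hc
          exact hxD (Or.inr ⟨-x, hc, by simp⟩)
      have hev := hc_const |x| hxabs hxabsC
      rw [Metric.eventually_nhds_iff] at hev
      obtain ⟨r, hr, hball⟩ := hev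
      refine ⟨r, hr, fun y hy => ?_⟩
      apply hball
      calc dist |y| |x| ≤ dist y x := abs_abs_sub_abs_le_abs_sub y x
        _ < r := hy
    set δ : ℝ → ℝ := fun x =>
      if h : x ∈ Set.Icc (-1:ℝ) 1 ∧ x ∉ D then
        (key x h.1 h.2).choose else 1 with hδdef
    have hgauge : IsGauge (-1) 1 δ := by
      intro x _
      by_cases h : x ∈ Set.Icc (-1:ℝ) 1 ∧ x ∉ D
      · simp only [hδdef, dif_pos h]
        exact (key x h.1 h.2).choose_spec.1
      · simp only [hδdef]
        rw [dif_neg h]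
        norm_num
    refine ⟨δ, hgauge, fun P hPsub => ?_⟩
    have hzero : (∑ i ∈ Finset.range P.n,
        if P.tag i ∈ D then
          (fun x => c |x|) (P.t (i + 1)) - (fun x => c |x|) (P.t i) else 0) = 0 := by
      have hcongr : ∀ i ∈ Finset.range P.n,
          (if P.tag i ∈ D then
            (fun x => c |x|) (P.t (i + 1)) - (fun x => c |x|) (P.t i) else 0)
          = c |P.t (i + 1)| - c |P.t i| := by
        intro i hi
        rw [Finset.mem_range] at hi
        by_cases htag : P.tag i ∈ D
        · simp only [if_pos htag]
        · rw [if_neg htag]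
          have hti : P.t i ∈ Set.Icc (-1:ℝ) 1 := P.t_mem (le_of_lt hi)
          have hti1 : P.t (i + 1) ∈ Set.Icc (-1:ℝ) 1 := P.t_mem hi
          have htagIcc : P.tag i ∈ Set.Icc (-1:ℝ) 1 := by
            have := P.tag_mem i hi
            exact ⟨le_trans hti.1 this.1, le_trans this.2 hti1.2⟩
          have hcond : P.tag i ∈ Set.Icc (-1:ℝ) 1 ∧ P.tag i ∉ D := ⟨htagIcc, htag⟩
          have hδeq : δ (P.tag i) = (key (P.tag i) hcond.1 hcond.2).choose := by
            simp only [hδdef, dif_pos hcond]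
          obtain ⟨hrpos, hrball⟩ := (key (P.tag i) hcond.1 hcond.2).choose_spec
          have hconst : ∀ y ∈ Set.Icc (P.t i) (P.t (i + 1)), c |y| = c |P.tag i| := by
            intro y hy
            apply hrball
            have hyIoo := hPsub i hi hy
            rw [hδeq] at hyIoo
            rw [Real.dist_eq, abs_lt]
            exact ⟨by linarith [hyIoo.1], by linarith [hyIoo.2]⟩
          have h1 := hconst (P.t i) ⟨le_rfl, P.t_mono i hi⟩
          have h2 := hconst (P.t (i + 1)) ⟨P.t_mono i hi, le_rfl⟩
          rw [h1, h2, sub_self]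
      rw [Finset.sum_congr rfl hcongr, Finset.sum_range_sub (fun k => c |P.t k|) P.n,
        P.t_first, P.t_last]
      norm_num
    beta_reduce
    beta_reduce at hzero
    rw [hzero, abs_zero]
    exact hε
end

section
/- Let F, g, f be as in the change-of-variables setting: g : [a,b] → ℝ differentiable a.e., F differentiable a.e. with F' = f a.e. Let B be the set where (F∘g)' = (f∘g)·g' fails and let A = g⁻¹(A_F) ∪ A_g, where A_F, A_g are the sets where F and g respectively fail to be differentiable. Then (F∘g)' = 0 almost everywhere on the symmetric difference (B \ A) ∪ (A \ B), and hence F∘g has negligible variation on (B \ A) ∪ (A \ B). -/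
/-!
On `B \ A` both `F` and `g` are differentiable and the chain rule fails, so either `g'(x) = 0`
or `F'(g x) ≠ f (g x)`; on `A \ B` the chain rule holds with some `L` although `F` is not
differentiable at `g x`. In both cases `(F ∘ g)'(x)` exists, and it vanishes unless `g'(x) ≠ 0`
and `g x` lies in the null set where `F' = f` fails. A map with nonzero derivative expands
volume locally, so it cannot pull a null set back to a set of positive measure: hence
`(F ∘ g)' = 0` a.e. on the symmetric difference. Negligible variation follows by splitting the
set into the points where `(F ∘ g)' = 0`, where a gauge makes each increment at most `c` times
the length of its interval, and a null set, covered by open sets of small measure chosen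
according to a pointwise Lipschitz constant.
-/

open Set MeasureTheory Filter
open scoped Classical

open scoped NNReal ENNReal Topology

theorem MeasureTheory.addHaar_eq_zero_of_addHaar_image_eq_zero {E : Type*}
    [NormedAddCommGroup E] [NormedSpace ℝ E] [FiniteDimensional ℝ E] [MeasurableSpace E]
    [BorelSpace E] (μ : Measure E) [μ.IsAddHaarMeasure] {f : E → E} {f' : E → E →L[ℝ] E}
    {s : Set E} (hf' : ∀ x ∈ s, HasFDerivWithinAt f (f' x) s x) (hdet : ∀ x ∈ s, (f' x).det ≠ 0)
    (hs : μ (f '' s) = 0) : μ s = 0 := by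
  -- Maps that are `r A`-close to an invertible `A` multiply volume by at least some `m > 0`;
  -- cut `s` into pieces where `f` is that close to some `f' y`.
  have hr : ∀ A : E →L[ℝ] E, ∃ r : ℝ≥0, r ≠ 0 ∧ (A.det ≠ 0 → ∃ m : ℝ≥0, m ≠ 0 ∧
      ∀ (t : Set E) (φ : E → E), ApproximatesLinearOn φ A t r → (m : ℝ≥0∞) * μ t ≤ μ (φ '' t)) := by
    intro A
    by_cases hA : A.det = 0
    · exact ⟨1, one_ne_zero, fun h => absurd hA h⟩
    obtain ⟨m, hm0, hmA⟩ := ENNReal.lt_iff_exists_nnreal_btwn.1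
      (ENNReal.ofReal_pos.2 (abs_pos.2 hA))
    obtain ⟨r, hr, hr0⟩ :=
      ((mul_le_addHaar_image_of_lt_det μ A hmA).and self_mem_nhdsWithin).exists
    exact ⟨r, hr0.ne', fun _ => ⟨m, by exact_mod_cast hm0.ne', hr⟩⟩
  choose r hr0 hr using hr
  obtain ⟨t, A, -, -, hst, hA, hAf'⟩ :=
    exists_partition_approximatesLinearOn_of_hasFDerivWithinAt f s f' hf' r hr0
  rcases s.eq_empty_or_nonempty with rfl | hne
  · exact measure_empty
  rw [← inter_eq_left.2 hst, inter_iUnion]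
  refine measure_iUnion_null fun n => ?_
  obtain ⟨y, hy, hAy⟩ := hAf' hne n
  obtain ⟨m, hm0, hm⟩ := hr (A n) (hAy ▸ hdet y hy)
  have hle : (m : ℝ≥0∞) * μ (s ∩ t n) ≤ 0 :=
    (hm _ f (hA n)).trans (hs ▸ measure_mono (image_mono inter_subset_left))
  simpa [hm0] using hle

theorem MeasureTheory.volume_eq_zero_of_volume_image_eq_zero {f f' : ℝ → ℝ} {s : Set ℝ}
    (hf' : ∀ x ∈ s, HasDerivWithinAt f (f' x) s x) (hf'0 : ∀ x ∈ s, f' x ≠ 0)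
    (hs : volume (f '' s) = 0) : volume s = 0 :=
  addHaar_eq_zero_of_addHaar_image_eq_zero volume (fun x hx => (hf' x hx).hasFDerivWithinAt)
    (by simpa only [ContinuousLinearMap.det_toSpanSingleton] using hf'0) hs

theorem exists_gauge_of_eventually {E : Set ℝ} {p : ℝ → ℝ → Prop}
    (hp : ∀ x ∈ E, ∀ᶠ y in 𝓝 x, p x y) :
    ∃ δ : ℝ → ℝ, (∀ x, 0 < δ x) ∧ ∀ x ∈ E, ∀ y, |y - x| < δ x → p x y := by
  have : ∀ x, ∃ d > 0, x ∈ E → ∀ y, |y - x| < d → p x y := fun x => by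
    by_cases hx : x ∈ E
    · obtain ⟨d, hd, hy⟩ := Metric.eventually_nhds_iff.1 (hp x hx)
      exact ⟨d, hd, fun _ y hyx => hy (by rwa [Real.dist_eq])⟩
    · exact ⟨1, one_pos, fun h => absurd h hx⟩
  choose δ hδ0 hδ using this
  exact ⟨δ, hδ0, hδ⟩

theorem HasDerivAt.eventually_abs_sub_le {h : ℝ → ℝ} {L x C : ℝ} (hh : HasDerivAt h L x)
    (hC : |L| < C) : ∀ᶠ y in 𝓝 x, |h y - h x| ≤ C * |y - x| := by
  filter_upwards [(hasDerivAt_iff_isLittleO.1 hh).def (sub_pos.2 hC)] with y hy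
  rw [Real.norm_eq_abs, Real.norm_eq_abs, smul_eq_mul] at hy
  calc |h y - h x| = |(h y - h x - (y - x) * L) + (y - x) * L| := by ring_nf
    _ ≤ |h y - h x - (y - x) * L| + |y - x| * |L| := (abs_add_le _ _).trans_eq (by rw [abs_mul])
    _ ≤ (C - |L|) * |y - x| + |y - x| * |L| := by gcongr
    _ = C * |y - x| := by ring

namespace TaggedPartition

variable {a b : ℝ} (P : TaggedPartition a b) {δ : ℝ → ℝ}

theorem monotoneOn_t : MonotoneOn P.t (Iic P.n) :=
  monotoneOn_of_le_succ ordConnected_Iic fun i _ _ hi => P.t_mono i (by simpa using hi)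

theorem pairwiseDisjoint_Ioo : (Iio P.n).PairwiseDisjoint fun i => Ioo (P.t i) (P.t (i + 1)) := by
  have hmono : Monotone fun i => P.t (min i P.n) := fun i j hij =>
    P.monotoneOn_t (mem_Iic.2 (min_le_right _ _)) (mem_Iic.2 (min_le_right _ _))
      (min_le_min_right _ hij)
  intro i (hi : i < P.n) j (hj : j < P.n) hij
  have := hmono.pairwise_disjoint_on_Ioo_succ hij
  rwa [Function.onFun, Order.succ_eq_add_one, Order.succ_eq_add_one, min_eq_left hi.le,
    min_eq_left hj.le, min_eq_left (show i + 1 ≤ P.n from hi),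
    min_eq_left (show j + 1 ≤ P.n from hj)] at this

theorem ofReal_sum_sub_le_volume {J : Finset ℕ} (hJ : ∀ i ∈ J, i < P.n) {U : Set ℝ}
    (hU : ∀ i ∈ J, Ioo (P.t i) (P.t (i + 1)) ⊆ U) :
    ENNReal.ofReal (∑ i ∈ J, (P.t (i + 1) - P.t i)) ≤ volume U := by
  rw [ENNReal.ofReal_sum_of_nonneg fun i hi => sub_nonneg.2 (P.t_mono i (hJ i hi))]
  calc ∑ i ∈ J, ENNReal.ofReal (P.t (i + 1) - P.t i)
      = volume (⋃ i ∈ J, Ioo (P.t i) (P.t (i + 1))) := by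
        rw [measure_biUnion_finset (P.pairwiseDisjoint_Ioo.subset hJ)
          fun _ _ => measurableSet_Ioo]
        simp only [Real.volume_Ioo]
    _ ≤ volume U := measure_mono (iUnion₂_subset hU)

theorem Subordinate.abs_sub_tag_lt {P : TaggedPartition a b} (hP : P.Subordinate δ) {i : ℕ}
    (hi : i < P.n) {y : ℝ} (hy : y ∈ Icc (P.t i) (P.t (i + 1))) : |y - P.tag i| < δ (P.tag i) :=
  abs_sub_lt_iff.2 ⟨by linarith [(hP i hi hy).2], by linarith [(hP i hi hy).1]⟩

theorem Subordinate.mono {P : TaggedPartition a b} {δ' : ℝ → ℝ} (hP : P.Subordinate δ)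
    (hδ : ∀ x, δ x ≤ δ' x) : P.Subordinate δ' := fun i hi =>
  (hP i hi).trans (Ioo_subset_Ioo (by linarith [hδ (P.tag i)]) (by linarith [hδ (P.tag i)]))

theorem Subordinate.abs_sub_le_mul {P : TaggedPartition a b} (hP : P.Subordinate δ) {h : ℝ → ℝ}
    {C : ℝ} {i : ℕ} (hi : i < P.n)
    (hh : ∀ y, |y - P.tag i| < δ (P.tag i) → |h y - h (P.tag i)| ≤ C * |y - P.tag i|) :
    |h (P.t (i + 1)) - h (P.t i)| ≤ C * (P.t (i + 1) - P.t i) := by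
  obtain ⟨hl, hr⟩ := P.tag_mem i hi
  have hleft := hh _ (hP.abs_sub_tag_lt hi (left_mem_Icc.2 (hl.trans hr)))
  have hright := hh _ (hP.abs_sub_tag_lt hi (right_mem_Icc.2 (hl.trans hr)))
  rw [abs_of_nonpos (sub_nonpos.2 hl)] at hleft
  rw [abs_of_nonneg (sub_nonneg.2 hr)] at hright
  have := abs_sub_le (h (P.t (i + 1))) (h (P.tag i)) (h (P.t i))
  rw [abs_sub_comm (h (P.tag i))] at this
  linarith

theorem Subordinate.sum_abs_sub_le_mul_volume {P : TaggedPartition a b} (hP : P.Subordinate δ)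
    {h : ℝ → ℝ} {J : Finset ℕ} (hJ : ∀ i ∈ J, i < P.n)
    {U : Set ℝ} (hU : volume U ≠ ∞) {C : ℝ} (hC : 0 ≤ C)
    (hδ : ∀ i ∈ J, ∀ y, |y - P.tag i| < δ (P.tag i) →
      y ∈ U ∧ |h y - h (P.tag i)| ≤ C * |y - P.tag i|) :
    ∑ i ∈ J, |h (P.t (i + 1)) - h (P.t i)| ≤ C * (volume U).toReal := by
  have hlen : ∑ i ∈ J, (P.t (i + 1) - P.t i) ≤ (volume U).toReal :=
    (ENNReal.ofReal_le_iff_le_toReal hU).1 <| P.ofReal_sum_sub_le_volume hJ fun i hi y hy =>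
      (hδ i hi y (hP.abs_sub_tag_lt (hJ i hi) (Ioo_subset_Icc_self hy))).1
  calc _ ≤ ∑ i ∈ J, C * (P.t (i + 1) - P.t i) :=
        Finset.sum_le_sum fun i hi => hP.abs_sub_le_mul (hJ i hi) fun y hy => (hδ i hi y hy).2
    _ = C * ∑ i ∈ J, (P.t (i + 1) - P.t i) := (Finset.mul_sum _ _ _).symm
    _ ≤ C * (volume U).toReal := mul_le_mul_of_nonneg_left hlen hC

end TaggedPartition

section NegVar

variable {a b : ℝ} {h : ℝ → ℝ} {E E' : Set ℝ}

theorem NegVar.mono (hV : NegVar a b h E') (hE : E ⊆ E') : NegVar a b h E := by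
  intro ε hε
  obtain ⟨δ, hδ, hP⟩ := hV ε hε
  refine ⟨δ, hδ, fun P hPs => (Finset.sum_le_sum fun i _ => ?_).trans_lt (hP P hPs)⟩
  by_cases hi : P.tag i ∈ E
  · simp [hi, hE hi]
  · rw [if_neg hi]
    split_ifs <;> positivity

theorem NegVar.union (hV : NegVar a b h E) (hV' : NegVar a b h E') :
    NegVar a b h (E ∪ E') := by
  intro ε hε
  obtain ⟨δ, hδ, hP⟩ := hV (ε / 2) (half_pos hε)
  obtain ⟨δ', hδ', hP'⟩ := hV' (ε / 2) (half_pos hε)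
  refine ⟨fun x => min (δ x) (δ' x), fun x hx => lt_min (hδ x hx) (hδ' x hx), fun P hPs => ?_⟩
  calc _ ≤ ∑ i ∈ Finset.range P.n,
        ((if P.tag i ∈ E then |h (P.t (i + 1)) - h (P.t i)| else 0) +
          if P.tag i ∈ E' then |h (P.t (i + 1)) - h (P.t i)| else 0) :=
        Finset.sum_le_sum fun i _ => by
          by_cases hi : P.tag i ∈ E <;> by_cases hi' : P.tag i ∈ E' <;> simp [hi, hi']
    _ < ε / 2 + ε / 2 := by
        rw [Finset.sum_add_distrib]
        exact add_lt_add (hP P (hPs.mono fun x => min_le_left _ _))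
          (hP' P (hPs.mono fun x => min_le_right _ _))
    _ = ε := add_halves ε

theorem negVar_of_hasDerivAt_zero (hE : ∀ x ∈ E, HasDerivAt h 0 x) : NegVar a b h E := by
  intro ε hε
  set c := ε / (|b - a| + 1)
  have hc : 0 < c := by positivity
  obtain ⟨δ, hδ0, hδ⟩ := exists_gauge_of_eventually fun x hx =>
    (hE x hx).eventually_abs_sub_le (C := c) (by rwa [abs_zero])
  refine ⟨δ, fun x _ => hδ0 x, fun P hP => ?_⟩
  calc _ ≤ ∑ i ∈ Finset.range P.n, c * (P.t (i + 1) - P.t i) := by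
        refine Finset.sum_le_sum fun i hi => ?_
        rw [Finset.mem_range] at hi
        split_ifs with hx
        · exact hP.abs_sub_le_mul hi (hδ _ hx)
        · exact mul_nonneg hc.le (sub_nonneg.2 (P.t_mono i hi))
    _ = c * (b - a) := by rw [← Finset.mul_sum, Finset.sum_range_sub, P.t_last, P.t_first]
    _ ≤ c * |b - a| := by gcongr; exact le_abs_self _
    _ < ε := by
        rw [div_mul_eq_mul_div, div_lt_iff₀ (by positivity)]
        nlinarith [abs_nonneg (b - a)]

theorem negVar_of_volume_eq_zero (hE : volume E = 0)
    (hh : ∀ x ∈ E, ∃ C, ∀ᶠ y in 𝓝 x, |h y - h x| ≤ C * |y - x|) : NegVar a b h E := by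
  intro ε hε
  -- Tags `x` with `⌈C x⌉₊ = n` have their intervals inside `U n`, so together they contribute
  -- at most `(n + 1) * η n = ε / 4 * 2⁻ⁿ`.
  choose! C hC using hh
  set k : ℝ → ℕ := fun x => ⌈C x⌉₊
  set η : ℕ → ℝ := fun n => ε / 4 * (1 / 2) ^ n / (n + 1)
  have hU : ∀ n, ∃ U ⊇ E, IsOpen U ∧ volume U < ENNReal.ofReal (η n) := fun n =>
    E.exists_isOpen_lt_of_lt _ (by rw [hE]; exact ENNReal.ofReal_pos.2 (by positivity))
  choose U hEU hUo hUη using hU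
  obtain ⟨δ, hδ0, hδ⟩ := exists_gauge_of_eventually
    (p := fun x y => y ∈ U (k x) ∧ |h y - h x| ≤ (k x + 1) * |y - x|) fun x hx =>
      ((hUo _).eventually_mem (hEU _ hx)).and <| (hC x hx).mono fun y hy => hy.trans <| by
        gcongr; exact (Nat.le_ceil _).trans (le_add_of_nonneg_right zero_le_one)
  refine ⟨δ, fun x _ => hδ0 x, fun P hP => ?_⟩
  rw [← Finset.sum_filter, ← Finset.sum_fiberwise_of_maps_to
    (fun i hi => Finset.mem_image_of_mem (fun i => k (P.tag i)) hi)]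
  calc _ ≤ ∑ n ∈ _, ε / 4 * (1 / 2 : ℝ) ^ n := Finset.sum_le_sum fun n _ => ?_
    _ ≤ ∑' n, ε / 4 * (1 / 2 : ℝ) ^ n :=
        Summable.sum_le_tsum _ (fun _ _ => by positivity) (summable_geometric_two.mul_left _)
    _ = ε / 2 := by rw [tsum_mul_left, tsum_geometric_two]; ring
    _ < ε := half_lt_self hε
  calc _ ≤ (n + 1) * (volume (U n)).toReal := by
        refine hP.sum_abs_sub_le_mul_volume (fun i hi => ?_) (hUη n).ne_top (by positivity)
          fun i hi => ?_
        all_goals simp only [Finset.mem_filter, Finset.mem_range] at hi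
        · exact hi.1.1
        · exact hi.2 ▸ hδ _ hi.1.2
    _ ≤ (n + 1) * η n := by
        gcongr
        exact ENNReal.toReal_le_of_le_ofReal (by positivity) (hUη n).le
    _ = ε / 4 * (1 / 2) ^ n := by simp only [η]; field_simp

theorem negVar_of_volume_not_hasDerivAt_zero (hd : ∀ x ∈ E, DifferentiableAt ℝ h x)
    (h0 : volume {x ∈ E | ¬HasDerivAt h 0 x} = 0) : NegVar a b h E := by
  have hsplit : E ⊆ {x ∈ E | HasDerivAt h 0 x} ∪ {x ∈ E | ¬HasDerivAt h 0 x} := fun x hx =>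
    (em _).imp (⟨hx, ·⟩) (⟨hx, ·⟩)
  refine (NegVar.union (negVar_of_hasDerivAt_zero fun x hx => hx.2)
    (negVar_of_volume_eq_zero h0 fun x hx => ?_)).mono hsplit
  exact ⟨_, (hd x hx.1).hasDerivAt.eventually_abs_sub_le (lt_add_one _)⟩

end NegVar

section ChainRule

variable {F g f : ℝ → ℝ} {x : ℝ}

theorem hasDerivAt_comp_zero_or_of_not_chainRule (hF : DifferentiableAt ℝ F (g x))
    (hg : DifferentiableAt ℝ g x)
    (hchain : ¬∃ L, HasDerivAt g L x ∧ HasDerivAt (F ∘ g) (f (g x) * L) x) :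
    HasDerivAt (F ∘ g) 0 x ∨ ¬HasDerivAt F (f (g x)) (g x) ∧ ∃ L ≠ 0, HasDerivAt g L x := by
  by_cases hg0 : deriv g x = 0
  · left
    simpa [hg0] using hF.hasDerivAt.comp x hg.hasDerivAt
  · exact .inr ⟨fun hFf => hchain ⟨_, hg.hasDerivAt, hFf.comp x hg.hasDerivAt⟩,
      _, hg0, hg.hasDerivAt⟩

theorem hasDerivAt_comp_zero_or_of_not_differentiableAt {L : ℝ} (hg : HasDerivAt g L x)
    (hFg : HasDerivAt (F ∘ g) (f (g x) * L) x) (hF : ¬DifferentiableAt ℝ F (g x)) :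
    HasDerivAt (F ∘ g) 0 x ∨ ¬HasDerivAt F (f (g x)) (g x) ∧ ∃ L ≠ 0, HasDerivAt g L x := by
  rcases eq_or_ne L 0 with rfl | hL
  · exact .inl (by simpa using hFg)
  · exact .inr ⟨fun hFf => hF hFf.differentiableAt, L, hL, hg⟩

theorem differentiableAt_comp_and_hasDerivAt_zero_or
    (hx : (DifferentiableAt ℝ F (g x) ∧ DifferentiableAt ℝ g x) ↔
      ¬∃ L, HasDerivAt g L x ∧ HasDerivAt (F ∘ g) (f (g x) * L) x) :
    DifferentiableAt ℝ (F ∘ g) x ∧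
      (HasDerivAt (F ∘ g) 0 x ∨ ¬HasDerivAt F (f (g x)) (g x) ∧ ∃ L ≠ 0, HasDerivAt g L x) := by
  by_cases hd : DifferentiableAt ℝ F (g x) ∧ DifferentiableAt ℝ g x
  · exact ⟨hd.1.comp x hd.2, hasDerivAt_comp_zero_or_of_not_chainRule hd.1 hd.2 (hx.1 hd)⟩
  · obtain ⟨L, hg, hFg⟩ := not_not.1 (mt hx.2 hd)
    exact ⟨hFg.differentiableAt, hasDerivAt_comp_zero_or_of_not_differentiableAt hg hFg
      fun hF => hd ⟨hF, hg.differentiableAt⟩⟩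

-- `hS` says that `S` lies in the symmetric difference of the set where the chain rule fails and
-- the set where `F` or `g` is not differentiable.
theorem volume_not_hasDerivAt_comp_zero_eq_zero_and_negVar {a b : ℝ} {D S : Set ℝ}
    (hSD : MapsTo g S D) (hF : ∀ᵐ y ∂volume.restrict D, HasDerivAt F (f y) y)
    (hS : ∀ x ∈ S, (DifferentiableAt ℝ F (g x) ∧ DifferentiableAt ℝ g x) ↔
      ¬∃ L, HasDerivAt g L x ∧ HasDerivAt (F ∘ g) (f (g x) * L) x) :
    volume {x ∈ S | ¬HasDerivAt (F ∘ g) 0 x} = 0 ∧ NegVar a b (F ∘ g) S := by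
  have key x (hx : x ∈ S) := differentiableAt_comp_and_hasDerivAt_zero_or (hS x hx)
  have hT : volume {x ∈ S | ¬HasDerivAt F (f (g x)) (g x) ∧ ∃ L ≠ 0, HasDerivAt g L x} = 0 := by
    refine volume_eq_zero_of_volume_image_eq_zero (f := g) (f' := deriv g) (fun x hx => ?_)
      (fun x hx => ?_) ?_
    · obtain ⟨L, -, hL⟩ := hx.2.2
      exact hL.differentiableAt.hasDerivAt.hasDerivWithinAt
    · obtain ⟨L, hL0, hL⟩ := hx.2.2
      rwa [hL.deriv]
    · refine measure_mono_null ?_ <| nonpos_iff_eq_zero.1 <|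
        (Measure.le_restrict_apply _ _).trans_eq (ae_iff.1 hF)
      rintro _ ⟨x, hx, rfl⟩
      exact ⟨hx.2.1, hSD hx.1⟩
  have h0 : volume {x ∈ S | ¬HasDerivAt (F ∘ g) 0 x} = 0 := by
    refine measure_mono_null ?_ hT
    rintro x ⟨hxS, hx0⟩
    exact ⟨hxS, (key x hxS).2.resolve_left hx0⟩
  exact ⟨h0, negVar_of_volume_not_hasDerivAt_zero (fun x hx => (key x hx).1) h0⟩

end ChainRule

theorem stmt17_general (a b : ℝ) (D : Set ℝ) (g F f : ℝ → ℝ)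
    (hD : Set.MapsTo g (Set.Icc a b) D)
    (hF : ∀ᵐ x ∂(MeasureTheory.volume.restrict D), DifferentiableAt ℝ F x)
    (hf : ∀ᵐ x ∂(MeasureTheory.volume.restrict D), deriv F x = f x) :
    MeasureTheory.volume
      {x ∈ ({x ∈ Set.Icc a b |
              ¬ ∃ L : ℝ, HasDerivAt g L x ∧ HasDerivAt (F ∘ g) (f (g x) * L) x} \
            ({x ∈ Set.Icc a b | ¬ DifferentiableAt ℝ F (g x)} ∪
             {x ∈ Set.Icc a b | ¬ DifferentiableAt ℝ g x}) ∪
            (({x ∈ Set.Icc a b | ¬ DifferentiableAt ℝ F (g x)} ∪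
              {x ∈ Set.Icc a b | ¬ DifferentiableAt ℝ g x}) \
             {x ∈ Set.Icc a b |
              ¬ ∃ L : ℝ, HasDerivAt g L x ∧ HasDerivAt (F ∘ g) (f (g x) * L) x})) |
        ¬ HasDerivAt (F ∘ g) 0 x} = 0 ∧
    NegVar a b (F ∘ g)
      ({x ∈ Set.Icc a b |
          ¬ ∃ L : ℝ, HasDerivAt g L x ∧ HasDerivAt (F ∘ g) (f (g x) * L) x} \
        ({x ∈ Set.Icc a b | ¬ DifferentiableAt ℝ F (g x)} ∪
         {x ∈ Set.Icc a b | ¬ DifferentiableAt ℝ g x}) ∪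
        (({x ∈ Set.Icc a b | ¬ DifferentiableAt ℝ F (g x)} ∪
          {x ∈ Set.Icc a b | ¬ DifferentiableAt ℝ g x}) \
         {x ∈ Set.Icc a b |
          ¬ ∃ L : ℝ, HasDerivAt g L x ∧ HasDerivAt (F ∘ g) (f (g x) * L) x})) := by
  have hFf : ∀ᵐ y ∂volume.restrict D, HasDerivAt F (f y) y := by
    filter_upwards [hF, hf] with y hy hfy
    exact hfy ▸ hy.hasDerivAt
  refine volume_not_hasDerivAt_comp_zero_eq_zero_and_negVar (hD.mono_left fun x hx => ?_) hFf
    fun x hx => ?_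
  · rcases hx with ⟨⟨hx, -⟩, -⟩ | ⟨⟨hx, -⟩ | ⟨hx, -⟩, -⟩ <;> exact hx
  · simp only [mem_union, Set.mem_sdiff, mem_ofPred_eq] at hx
    generalize (∃ L, HasDerivAt g L x ∧ HasDerivAt (F ∘ g) (f (g x) * L) x) = A at hx ⊢
    tauto

/-- with `B` the set where the chain rule fails and
`A = g⁻¹(A_F) ∪ A_g` (`A_F`, `A_g` the non-differentiability sets of `F` and `g`),
`(F ∘ g)' = 0` a.e. on the symmetric difference of `B` and `A`, and `F ∘ g` has negligible
variation there. -/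
theorem stmt17 (a b : ℝ) (hab : a ≤ b) (D : Set ℝ) (g F f : ℝ → ℝ)
    (hD : Set.MapsTo g (Set.Icc a b) D)
    (hg : ∀ᵐ x ∂(MeasureTheory.volume.restrict (Set.Icc a b)), DifferentiableAt ℝ g x)
    (hF : ∀ᵐ x ∂(MeasureTheory.volume.restrict D), DifferentiableAt ℝ F x)
    (hf : ∀ᵐ x ∂(MeasureTheory.volume.restrict D), deriv F x = f x) :
    MeasureTheory.volume
      {x ∈ ({x ∈ Set.Icc a b |
              ¬ ∃ L : ℝ, HasDerivAt g L x ∧ HasDerivAt (F ∘ g) (f (g x) * L) x} \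
            ({x ∈ Set.Icc a b | ¬ DifferentiableAt ℝ F (g x)} ∪
             {x ∈ Set.Icc a b | ¬ DifferentiableAt ℝ g x}) ∪
            (({x ∈ Set.Icc a b | ¬ DifferentiableAt ℝ F (g x)} ∪
              {x ∈ Set.Icc a b | ¬ DifferentiableAt ℝ g x}) \
             {x ∈ Set.Icc a b |
              ¬ ∃ L : ℝ, HasDerivAt g L x ∧ HasDerivAt (F ∘ g) (f (g x) * L) x})) |
        ¬ HasDerivAt (F ∘ g) 0 x} = 0 ∧
    NegVar a b (F ∘ g)
      ({x ∈ Set.Icc a b |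
          ¬ ∃ L : ℝ, HasDerivAt g L x ∧ HasDerivAt (F ∘ g) (f (g x) * L) x} \
        ({x ∈ Set.Icc a b | ¬ DifferentiableAt ℝ F (g x)} ∪
         {x ∈ Set.Icc a b | ¬ DifferentiableAt ℝ g x}) ∪
        (({x ∈ Set.Icc a b | ¬ DifferentiableAt ℝ F (g x)} ∪
          {x ∈ Set.Icc a b | ¬ DifferentiableAt ℝ g x}) \
         {x ∈ Set.Icc a b |
          ¬ ∃ L : ℝ, HasDerivAt g L x ∧ HasDerivAt (F ∘ g) (f (g x) * L) x})) :=
  stmt17_general a b D g F f hD hF hf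
end

section
/- If f : [a,b] → ℝ has negligible variation on a set E ⊆ [a,b], then f'(x) = 0 for almost every x ∈ E at which f is differentiable; more strongly, the set of x ∈ E where some Dini derivative of f is nonzero has Lebesgue measure zero. -/
open Set MeasureTheory Filter
open scoped Classical

open Topology

/-! For `c > 0` let `B c` be the set of `x ∈ E ∩ (a, b)` such that `c * |y - x| ≤ |f y - f x|`
for `y` arbitrarily close to `x`. A point of `E` at which the difference quotients do not tend
to `0` is an endpoint or lies in some `B (1 / (k + 1))`, so it suffices that each `B c` is null.
Fix `ε` and a gauge `δ` witnessing negligible variation. Every `x ∈ B c` carries arbitrarily short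
`δ`-fine intervals `[x, y]` with `c * |y - x| ≤ |f y - f x|`; Vitali's covering lemma bounds
`|B c|` by `8 * ∑ |y - x|` over a disjoint subfamily, and a finite disjoint subfamily can be
completed (Cousin's lemma) to a `δ`-fine tagged partition of `[a, b]`, whence
`c * ∑ |y - x| < ε`. -/

lemma forall_lt_add_of_forall_lt {m n : ℕ} {p : ℕ → Prop} (h₁ : ∀ i < m, p i)
    (h₂ : ∀ j < n, p (m + j)) : ∀ i < m + n, p i := by
  intro i hi
  rcases lt_or_ge i m with h | h
  · exact h₁ i h
  · obtain ⟨j, rfl⟩ := Nat.exists_eq_add_of_le h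
    exact h₂ j (by omega)

lemma IsGauge.mono {a b a' b' : ℝ} {δ : ℝ → ℝ} (h : IsGauge a b δ) (ha : a ≤ a') (hb : b' ≤ b) :
    IsGauge a' b' δ :=
  fun x hx => h x (Icc_subset_Icc ha hb hx)

namespace TaggedPartition

variable {a b c : ℝ}

noncomputable def variationOn (f : ℝ → ℝ) (E : Set ℝ) (P : TaggedPartition a b) : ℝ :=
  ∑ i ∈ Finset.range P.n, if P.tag i ∈ E then |f (P.t (i + 1)) - f (P.t i)| else 0

lemma variationOn_nonneg (f : ℝ → ℝ) (E : Set ℝ) (P : TaggedPartition a b) :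
    0 ≤ P.variationOn f E :=
  Finset.sum_nonneg fun _ _ => by positivity

def nil (a : ℝ) : TaggedPartition a a where
  n := 0
  t _ := a
  tag _ := a
  t_first := rfl
  t_last := rfl
  t_mono _ hi := absurd hi (Nat.not_lt_zero _)
  tag_mem _ hi := absurd hi (Nat.not_lt_zero _)

lemma nil_subordinate (a : ℝ) (δ : ℝ → ℝ) : (nil a).Subordinate δ :=
  fun _ hi => absurd hi (Nat.not_lt_zero _)

noncomputable def single {x : ℝ} (hax : a ≤ x) (hxb : x ≤ b) : TaggedPartition a b where
  n := 1
  t i := if i = 0 then a else b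
  tag _ := x
  t_first := if_pos rfl
  t_last := if_neg one_ne_zero
  t_mono i hi := by
    obtain rfl : i = 0 := Nat.lt_one_iff.mp hi
    simpa using hax.trans hxb
  tag_mem i hi := by
    obtain rfl : i = 0 := Nat.lt_one_iff.mp hi
    simpa using ⟨hax, hxb⟩

lemma single_subordinate {x : ℝ} {δ : ℝ → ℝ} (hax : a ≤ x) (hxb : x ≤ b)
    (h : Icc a b ⊆ Ioo (x - δ x) (x + δ x)) : (single hax hxb).Subordinate δ := by
  intro i hi
  obtain rfl : i = 0 := Nat.lt_one_iff.mp hi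
  simpa [single] using h

lemma variationOn_single {f : ℝ → ℝ} {E : Set ℝ} {x : ℝ} (hax : a ≤ x) (hxb : x ≤ b)
    (hx : x ∈ E) : (single hax hxb).variationOn f E = |f b - f a| := by
  simp [variationOn, single, hx]

section Glue

variable (P : TaggedPartition a b) (Q : TaggedPartition b c)

def glueT (i : ℕ) : ℝ := if i ≤ P.n then P.t i else Q.t (i - P.n)

def glueTag (i : ℕ) : ℝ := if i < P.n then P.tag i else Q.tag (i - P.n)

lemma glueT_of_le {i : ℕ} (h : i ≤ P.n) : glueT P Q i = P.t i := if_pos h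

lemma glueT_add (j : ℕ) : glueT P Q (P.n + j) = Q.t j := by
  rcases Nat.eq_zero_or_pos j with rfl | hj
  · simp [glueT, P.t_last, Q.t_first]
  · simp [glueT, show ¬P.n + j ≤ P.n by omega]

lemma glueTag_of_lt {i : ℕ} (h : i < P.n) : glueTag P Q i = P.tag i := if_pos h

lemma glueTag_add (j : ℕ) : glueTag P Q (P.n + j) = Q.tag j := by
  simp [glueTag]

def glue : TaggedPartition a c where
  n := P.n + Q.n
  t := glueT P Q
  tag := glueTag P Q
  t_first := (glueT_of_le P Q (Nat.zero_le _)).trans P.t_first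
  t_last := (glueT_add P Q Q.n).trans Q.t_last
  t_mono := forall_lt_add_of_forall_lt
    (fun i hi => by rw [glueT_of_le P Q hi.le, glueT_of_le P Q hi]; exact P.t_mono i hi)
    (fun j hj => by rw [glueT_add, add_assoc, glueT_add]; exact Q.t_mono j hj)
  tag_mem := forall_lt_add_of_forall_lt
    (fun i hi => by
      rw [glueT_of_le P Q hi.le, glueT_of_le P Q hi, glueTag_of_lt P Q hi]
      exact P.tag_mem i hi)
    (fun j hj => by rw [glueT_add, add_assoc, glueT_add, glueTag_add]; exact Q.tag_mem j hj)

variable {P Q}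

@[simp] lemma glue_n : (P.glue Q).n = P.n + Q.n := rfl

@[simp] lemma glue_t : (P.glue Q).t = glueT P Q := rfl

@[simp] lemma glue_tag : (P.glue Q).tag = glueTag P Q := rfl

lemma glue_subordinate {δ : ℝ → ℝ} (hP : P.Subordinate δ) (hQ : Q.Subordinate δ) :
    (P.glue Q).Subordinate δ :=
  forall_lt_add_of_forall_lt
    (fun i hi => by
      rw [glue_t, glue_tag, glueT_of_le P Q hi.le, glueT_of_le P Q hi, glueTag_of_lt P Q hi]
      exact hP i hi)
    (fun j hj => by
      rw [glue_t, glue_tag, glueT_add, add_assoc, glueT_add, glueTag_add]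
      exact hQ j hj)

lemma variationOn_glue (f : ℝ → ℝ) (E : Set ℝ) :
    (P.glue Q).variationOn f E = P.variationOn f E + Q.variationOn f E := by
  rw [variationOn, glue_n, Finset.sum_range_add]
  congr 1
  · refine Finset.sum_congr rfl fun i hi => ?_
    have hi : i < P.n := Finset.mem_range.mp hi
    simp only [glue_t, glue_tag, glueT_of_le P Q hi.le, glueT_of_le P Q hi, glueTag_of_lt P Q hi]
  · refine Finset.sum_congr rfl fun j _ => ?_
    simp only [glue_t, glue_tag, glueT_add, add_assoc, glueTag_add]

end Glue

/-- Cousin's lemma. -/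
theorem exists_subordinate {δ : ℝ → ℝ} (hab : a ≤ b) (hδ : IsGauge a b δ) :
    ∃ P : TaggedPartition a b, P.Subordinate δ := by
  set S : Set ℝ := {x | x ∈ Icc a b ∧ ∃ P : TaggedPartition a x, P.Subordinate δ}
  have haS : a ∈ S := ⟨⟨le_rfl, hab⟩, nil a, nil_subordinate a δ⟩
  have hbdd : BddAbove S := ⟨b, fun x hx => hx.1.2⟩
  set s := sSup S
  have hs : s ∈ Icc a b := ⟨le_csSup hbdd haS, csSup_le ⟨a, haS⟩ fun x hx => hx.1.2⟩
  have hδs : 0 < δ s := hδ s hs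
  obtain ⟨x, hxS, hx⟩ : ∃ x ∈ S, s - δ s < x := exists_lt_of_lt_csSup ⟨a, haS⟩ (by linarith)
  have hxs : x ≤ s := le_csSup hbdd hxS
  obtain ⟨⟨hax, -⟩, P, hP⟩ := hxS
  -- extend a fine partition of `[a, x]` by the single interval `[x, y]` tagged at `s`
  set y := min b (s + δ s / 2)
  have hsy : s ≤ y := le_min hs.2 (by linarith)
  have hQ : (single hxs hsy).Subordinate δ :=
    single_subordinate hxs hsy fun z hz =>
      ⟨by linarith [hz.1], by linarith [hz.2, min_le_right b (s + δ s / 2)]⟩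
  have hyS : y ∈ S :=
    ⟨⟨hax.trans (hxs.trans hsy), min_le_left _ _⟩, P.glue (single hxs hsy), glue_subordinate hP hQ⟩
  have hys : y ≤ s := le_csSup hbdd hyS
  have hyb : y = b := (min_choice _ _).resolve_right fun h => by linarith
  exact hyb ▸ hyS.2

/-- `P` contains each `[u j, v j]`, tagged at `x j`; the gaps are filled by Cousin's lemma. -/
theorem exists_subordinate_sum_le_variationOn {ι : Type*} (f : ℝ → ℝ) (E : Set ℝ)
    {δ : ℝ → ℝ} (u v x : ι → ℝ) (s : Finset ι) (hac : a ≤ c) (hδ : IsGauge a c δ)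
    (hfine : ∀ j ∈ s, a ≤ u j ∧ v j ≤ c ∧ x j ∈ E ∧ x j ∈ Icc (u j) (v j) ∧
      Icc (u j) (v j) ⊆ Ioo (x j - δ (x j)) (x j + δ (x j)))
    (hdisj : (s : Set ι).PairwiseDisjoint fun j => Icc (u j) (v j)) :
    ∃ P : TaggedPartition a c, P.Subordinate δ ∧
      ∑ j ∈ s, |f (v j) - f (u j)| ≤ P.variationOn f E := by
  induction s using Finset.induction_on_max_value u generalizing c with
  | empty =>
    obtain ⟨P, hP⟩ := exists_subordinate hac hδ
    exact ⟨P, hP, by simpa using P.variationOn_nonneg f E⟩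
  | insert j s hj hmax ih =>
    obtain ⟨hauj, hvjc, hxjE, ⟨hujxj, hxjvj⟩, hsubj⟩ := hfine j (Finset.mem_insert_self j s)
    have hleft : ∀ k ∈ s, v k ≤ u j := by
      intro k hk
      by_contra! hlt
      exact Set.disjoint_left.mp
        (hdisj (Finset.mem_insert_of_mem hk) (Finset.mem_insert_self j s)
          (ne_of_mem_of_not_mem hk hj))
        ⟨hmax k hk, hlt.le⟩ ⟨le_rfl, hujxj.trans hxjvj⟩
    obtain ⟨P₁, hP₁, hsum₁⟩ := ih hauj (hδ.mono le_rfl ((hujxj.trans hxjvj).trans hvjc))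
      (fun k hk => by
        obtain ⟨hauk, -, hrest⟩ := hfine k (Finset.mem_insert_of_mem hk)
        exact ⟨hauk, hleft k hk, hrest⟩)
      (hdisj.subset (by simp))
    obtain ⟨P₃, hP₃⟩ := exists_subordinate hvjc (hδ.mono (hauj.trans (hujxj.trans hxjvj)) le_rfl)
    refine ⟨(P₁.glue (single hujxj hxjvj)).glue P₃,
      glue_subordinate (glue_subordinate hP₁ (single_subordinate hujxj hxjvj hsubj)) hP₃, ?_⟩
    rw [Finset.sum_insert hj, variationOn_glue, variationOn_glue,
      variationOn_single hujxj hxjvj hxjE]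
    linarith [P₃.variationOn_nonneg f E]

end TaggedPartition

theorem NegVar.exists_gauge_sum_lt {a b : ℝ} {f : ℝ → ℝ} {E : Set ℝ} (h : NegVar a b f E)
    (hab : a ≤ b) {ε : ℝ} (hε : 0 < ε) :
    ∃ δ, IsGauge a b δ ∧ ∀ {ι : Type*} (u v x : ι → ℝ) (s : Finset ι),
      (∀ j ∈ s, a ≤ u j ∧ v j ≤ b ∧ x j ∈ E ∧ x j ∈ Icc (u j) (v j) ∧
        Icc (u j) (v j) ⊆ Ioo (x j - δ (x j)) (x j + δ (x j))) →
      (s : Set ι).PairwiseDisjoint (fun j => Icc (u j) (v j)) →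
      ∑ j ∈ s, |f (v j) - f (u j)| < ε := by
  obtain ⟨δ, hδ, hvar⟩ := h ε hε
  refine ⟨δ, hδ, fun u v x s hfine hdisj => ?_⟩
  obtain ⟨P, hP, hsum⟩ :=
    TaggedPartition.exists_subordinate_sum_le_variationOn f E u v x s hab hδ hfine hdisj
  exact hsum.trans_lt (hvar P hP)

theorem volume_le_of_sum_radius_le {B : Set ℝ} {r : ℝ → ℝ} {R M : ℝ} (hr : ∀ p ∈ B, 0 < r p)
    (hR : ∀ p ∈ B, r p ≤ R)
    (hsum : ∀ S : Finset ℝ, ↑S ⊆ B →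
      (S : Set ℝ).PairwiseDisjoint (fun q => Metric.closedBall q (r q)) → ∑ q ∈ S, r q ≤ M) :
    volume B ≤ ENNReal.ofReal (8 * M) := by
  obtain ⟨w, hwB, hwdisj, hwcov⟩ :=
    Vitali.exists_disjoint_subfamily_covering_enlargement_closedBall B id r R hR 4 (by norm_num)
  have hcov : B ⊆ ⋃ q ∈ w, Metric.closedBall q (4 * r q) := fun p hp => by
    obtain ⟨q, hqw, hq⟩ := hwcov p hp
    exact mem_biUnion hqw (hq (Metric.mem_closedBall_self (hr p hp).le))
  have hw : w.Countable := hwdisj.countable_of_nonempty_interior fun q hq => by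
    rw [interior_closedBall _ (hr q (hwB hq)).ne']
    exact Metric.nonempty_ball.mpr (hr q (hwB hq))
  calc volume B ≤ ∑' q : w, volume (Metric.closedBall (q : ℝ) (4 * r q)) :=
        (measure_mono hcov).trans (measure_biUnion_le _ hw _)
    _ = ∑' q : w, ENNReal.ofReal (8 * r q) := by
        simp only [Real.volume_closedBall, ← mul_assoc]
        norm_num
    _ ≤ ENNReal.ofReal (8 * M) := ENNReal.summable.tsum_le_of_sum_le fun S => by
        rw [← ENNReal.ofReal_sum_of_nonneg fun q _ => by linarith [hr q (hwB q.2)],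
          ← Finset.mul_sum]
        refine ENNReal.ofReal_le_ofReal (mul_le_mul_of_nonneg_left ?_ (by norm_num))
        have hSw : ↑(S.map (Function.Embedding.subtype (· ∈ w))) ⊆ w := by simp
        exact (Finset.sum_map S _ r).symm.le.trans (hsum _ (hSw.trans hwB) (hwdisj.subset hSw))

lemma abs_sub_comp_max_min (f : ℝ → ℝ) (x y : ℝ) :
    |f (max x y) - f (min x y)| = |f y - f x| := by
  rcases le_total x y with h | h <;> simp [h, abs_sub_comm]

theorem NegVar.volume_frequently_le_abs_sub_eq_zero {a b : ℝ} {f : ℝ → ℝ} {E : Set ℝ}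
    (h : NegVar a b f E) {c : ℝ} (hc : 0 < c) :
    volume {x ∈ E ∩ Ioo a b | ∃ᶠ y in 𝓝[≠] x, c * |y - x| ≤ |f y - f x|} = 0 := by
  set B := {x ∈ E ∩ Ioo a b | ∃ᶠ y in 𝓝[≠] x, c * |y - x| ≤ |f y - f x|}
  rcases lt_or_ge b a with hba | hab
  · simp [B, Ioo_eq_empty_of_le hba.le]
  suffices hB : ∀ ε > 0, volume B ≤ ENNReal.ofReal ε from
    le_antisymm (ENNReal.le_of_forall_pos_le_add fun η hη _ => by simpa using hB η hη) bot_le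
  intro ε hε
  obtain ⟨δ, hδ, hsum⟩ := h.exists_gauge_sum_lt hab (show 0 < c * ε / 8 by positivity)
  -- `y p` is so close to `p` that `uIcc p (y p)` is a `δ`-fine subinterval of `(a, b)`
  have hwit : ∀ p ∈ B, ∃ y, y ≠ p ∧ (|y - p| < δ p ∧ |y - p| < p - a ∧ |y - p| < b - p) ∧
      c * |y - p| ≤ |f y - f p| := by
    rintro p ⟨⟨-, hpa, hpb⟩, hp⟩
    have hρ : 0 < min (δ p) (min (p - a) (b - p)) :=
      lt_min (hδ p ⟨hpa.le, hpb.le⟩) (lt_min (by linarith) (by linarith))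
    obtain ⟨y, hy, hyp, hyρ⟩ := (hp.and_eventually (eventually_mem_nhdsWithin.and
      (nhdsWithin_le_nhds (Metric.ball_mem_nhds p hρ)))).exists
    exact ⟨y, hyp, by simpa [Real.dist_eq] using hyρ, hy⟩
  choose! y hyp hyρ hyf using hwit
  have hr : ∀ p ∈ B, 0 < |y p - p| := fun p hp => abs_pos.mpr (sub_ne_zero.mpr (hyp p hp))
  have hrb : ∀ p ∈ B, |y p - p| ≤ b - a := fun p hp => by
    linarith [(hyρ p hp).2.1, hp.1.2.2]
  refine (volume_le_of_sum_radius_le (M := ε / 8) hr hrb fun S hSB hSdisj => ?_).trans_eq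
    (by ring_nf)
  have hfine : ∀ q ∈ S, a ≤ min q (y q) ∧ max q (y q) ≤ b ∧ q ∈ E ∧
      q ∈ Icc (min q (y q)) (max q (y q)) ∧
      Icc (min q (y q)) (max q (y q)) ⊆ Ioo (q - δ q) (q + δ q) := by
    intro q hq
    obtain ⟨hqδ, hqa, hqb⟩ := hyρ q (hSB hq)
    have hmem : ∀ z ∈ uIcc q (y q), |z - q| ≤ |y q - q| := fun z hz => abs_sub_left_of_mem_uIcc hz
    refine ⟨?_, ?_, (hSB hq).1.1, ⟨min_le_left _ _, le_max_left _ _⟩, fun z hz => ?_⟩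
    · exact le_min (by linarith [abs_nonneg (y q - q)]) (by linarith [abs_lt.mp hqa])
    · exact max_le (by linarith [abs_nonneg (y q - q)]) (by linarith [abs_lt.mp hqb])
    · constructor <;> linarith [abs_le.mp (hmem z hz)]
  have hdisj : (S : Set ℝ).PairwiseDisjoint fun q => Icc (min q (y q)) (max q (y q)) :=
    hSdisj.mono fun q z hz => by
      simpa [Real.dist_eq] using abs_sub_left_of_mem_uIcc hz
  have hlt := hsum (fun q => min q (y q)) (fun q => max q (y q)) id S hfine hdisj
  simp only [abs_sub_comp_max_min] at hlt
  have : c * ∑ q ∈ S, |y q - q| < c * (ε / 8) := by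
    rw [Finset.mul_sum]
    exact (Finset.sum_le_sum fun q hq => hyf q (hSB hq)).trans_lt (by linarith)
  exact (lt_of_mul_lt_mul_left this hc.le).le

lemma frequently_le_abs_sub_of_not_tendsto {f : ℝ → ℝ} {x : ℝ}
    (h : ¬Tendsto (fun y => |(f y - f x) / (y - x)|) (𝓝[≠] x) (𝓝 0)) :
    ∃ k : ℕ, ∃ᶠ y in 𝓝[≠] x, 1 / ((k : ℝ) + 1) * |y - x| ≤ |f y - f x| := by
  rw [Metric.tendsto_nhds] at h
  push Not at h
  obtain ⟨ε, hε, hfreq⟩ := h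
  obtain ⟨k, hk⟩ := exists_nat_one_div_lt hε
  refine ⟨k, (hfreq.and_eventually eventually_mem_nhdsWithin).mono fun y ⟨hy, hyx⟩ => ?_⟩
  have hpos : 0 < |y - x| := abs_pos.mpr (sub_ne_zero.mpr hyx)
  rw [Real.dist_0_eq_abs, abs_abs, abs_div, le_div_iff₀ hpos] at hy
  exact (mul_le_mul_of_nonneg_right hk.le hpos.le).trans hy

theorem NegVar.volume_not_tendsto_abs_slope_eq_zero {a b : ℝ} {f : ℝ → ℝ} {E : Set ℝ}
    (hE : E ⊆ Icc a b) (h : NegVar a b f E) :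
    volume {x ∈ E | ¬Tendsto (fun y => |(f y - f x) / (y - x)|) (𝓝[≠] x) (𝓝 0)} = 0 := by
  refine measure_mono_null (t := {a, b} ∪ ⋃ k : ℕ, {x ∈ E ∩ Ioo a b |
      ∃ᶠ y in 𝓝[≠] x, 1 / ((k : ℝ) + 1) * |y - x| ≤ |f y - f x|}) ?_
    (measure_union_null ((toFinite _).measure_zero _)
      (measure_iUnion_null fun k => h.volume_frequently_le_abs_sub_eq_zero (by positivity)))
  rintro x ⟨hxE, hx⟩
  rcases eq_endpoints_or_mem_Ioo_of_mem_Icc (hE hxE) with rfl | rfl | hxI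
  · exact Or.inl (by simp)
  · exact Or.inl (by simp)
  · obtain ⟨k, hk⟩ := frequently_le_abs_sub_of_not_tendsto hx
    exact Or.inr (mem_iUnion.mpr ⟨k, ⟨hxE, hxI⟩, hk⟩)

/-- if `f` has negligible variation on `E`, then `f' = 0` a.e. on the set of
points of `E` where `f` is differentiable; more strongly, the set of points of `E` where
some Dini derivative is nonzero is null. -/
theorem stmt19 (a b : ℝ) (f : ℝ → ℝ) (E : Set ℝ) (hE : E ⊆ Set.Icc a b)
    (h : NegVar a b f E) :
    MeasureTheory.volume {x ∈ E | DifferentiableAt ℝ f x ∧ deriv f x ≠ 0} = 0 ∧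
    MeasureTheory.volume {x ∈ E | ¬ Filter.Tendsto (fun y => |(f y - f x) / (y - x)|)
      (nhdsWithin x {x}ᶜ) (nhds 0)} = 0 := by
  have hnull := h.volume_not_tendsto_abs_slope_eq_zero hE
  refine ⟨measure_mono_null ?_ hnull, hnull⟩
  rintro x ⟨hxE, hdiff, hderiv⟩
  refine ⟨hxE, fun hT => hderiv ?_⟩
  have hslope := (hasDerivAt_iff_tendsto_slope.mp hdiff.hasDerivAt).abs
  simp only [slope_def_field] at hslope
  exact abs_eq_zero.mp (tendsto_nhds_unique hslope hT)
end
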